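/- arXiv:1210.5569 — 4 statements merged into one kernel-verified Lean document; each statement's English description precedes it below -/
import Mathlib

section
/- Let F be a field, ι a finite index set, z ∈ ι, and B : ι → ι → ℤ an integer matrix with B(z,z) = 0; let B̄ = μ_z(B). Let x, x̄, p⁺, p⁻, p̄⁺, p̄⁻ : ι → F take only nonzero values, and assume: (a) x̄(f) = x(f) for all f ≠ z; (b) x(z)·x̄(z) = p⁺(z)·∏_f x(f)^{[B(f,z)]₊} + p⁻(z)·∏_f x(f)^{[−B(f,z)]₊}; (c) p̄⁺(z) = p⁻(z) and p̄⁻(z) = p⁺(z); (d) for every y ≠ z, p̄⁺(y)/p̄⁻(y) = (p⁺(y)/p⁻(y))·(p⁺(z)/p⁻(z))^{[B(z,y)]₊}·p⁻(z)^{B(z,y)}. Define ŷ(e) = (p⁺(e)/p⁻(e))·∏_f x(f)^{B(f,e)} and ŷ̄(e) = (p̄⁺(e)/p̄⁻(e))·∏_f x̄(f)^{B̄(f,e)} (integer powers of nonzero field elements). Then ŷ̄(z) = ŷ(z)⁻¹, and for every f ≠ z, ŷ̄(f) = ŷ(f)·ŷ(z)^{[B(z,f)]₊}·(ŷ(z)+1)^{−B(z,f)};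 in particular ŷ(z)+1 ≠ 0, since p⁻(z)·∏_f x(f)^{[−B(f,z)]₊}·(ŷ(z)+1) = x(z)·x̄(z) ≠ 0. Thus the quantities ŷ form a (normalized) Y-pattern: the tuple ŷ uniquely determines the mutated tuple ŷ̄. -/
open Finset

/-- Matrix mutation in direction `z`. -/
def matrixMutation {ι : Type*} [DecidableEq ι] (B : ι → ι → ℤ) (z : ι) : ι → ι → ℤ :=
  fun x y =>
    if x = z ∨ y = z then -B x y
    else if 0 ≤ B x z * B z y then B x y + |B x z| * B z y
    else B x y

/-! With `b = B z y`, the mutated column `B̄(·, y)` agrees off `z` with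
`B(·, y) + [b]₊ B(·, z) + b [-B(·, z)]₊`, which is linear in the column `B(·, z)`. Hence
`∏ x̄^B̄(·,y) = (x z x̄ z)^(-b) ∏ x^B(·,y) (∏ x^B(·,z))^[b]₊ (∏ x^[-B(·,z)]₊)^b`.
The exchange relation says `x z x̄ z = p⁻(z) ∏ x^[-B(·,z)]₊ (ŷ z + 1)`, and the coefficient rule
absorbs the leftover power of `p⁻(z)`. -/

section MatrixMutation

variable {ι : Type*} [DecidableEq ι] (B : ι → ι → ℤ) (z : ι)

theorem matrixMutation_left_self (y : ι) : matrixMutation B z z y = -B z y := by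
  simp [matrixMutation]

theorem matrixMutation_right_self (x : ι) : matrixMutation B z x z = -B x z := by
  simp [matrixMutation]

theorem matrixMutation_of_ne {x y : ι} (hx : x ≠ z) (hy : y ≠ z) :
    matrixMutation B z x y = B x y + B x z * max (B z y) 0 + max (-B x z) 0 * B z y := by
  simp only [matrixMutation, hx, hy, or_self, if_false]
  rcases le_total 0 (B x z) with ha | ha <;> rcases le_total 0 (B z y) with hb | hb <;>
    simp only [abs_of_nonneg, abs_of_nonpos, max_eq_left, max_eq_right, ha, hb, neg_nonneg,
      neg_nonpos] <;> split_ifs <;> nlinarith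

end MatrixMutation

section Monomials

variable {ι : Type*} [Fintype ι]

section CommGroupWithZero

variable {G₀ : Type*} [CommGroupWithZero G₀] {x : ι → G₀}

theorem prod_zpow_ne_zero (hx : ∀ f, x f ≠ 0) (c : ι → ℤ) : ∏ f, x f ^ c f ≠ 0 :=
  prod_ne_zero_iff.mpr fun f _ => zpow_ne_zero _ (hx f)

theorem prod_zpow_add (hx : ∀ f, x f ≠ 0) (c d : ι → ℤ) :
    ∏ f, x f ^ (c f + d f) = (∏ f, x f ^ c f) * ∏ f, x f ^ d f := by
  rw [← prod_mul_distrib]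
  exact prod_congr rfl fun f _ => zpow_add₀ (hx f) _ _

theorem prod_zpow_mul (c : ι → ℤ) (m : ℤ) :
    ∏ f, x f ^ (c f * m) = (∏ f, x f ^ c f) ^ m := by
  rw [← prod_zpow]
  exact prod_congr rfl fun f _ => zpow_mul _ _ _

theorem prod_eq_div_mul_prod_of_eq_of_ne [DecidableEq ι] {g g' : ι → G₀} {z : ι} (hz : g z ≠ 0)
    (h : ∀ f, f ≠ z → g' f = g f) : ∏ f, g' f = g' z / g z * ∏ f, g f := by
  rw [← mul_prod_erase univ g' (mem_univ z), ← mul_prod_erase univ g (mem_univ z),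
    prod_congr rfl fun f hf => h f (ne_of_mem_erase hf), ← mul_assoc, div_mul_cancel₀ _ hz]

end CommGroupWithZero

theorem mul_prod_zpow_posPart_add {F : Type*} [Field F] {x : ι → F} (hx : ∀ f, x f ≠ 0)
    (c : ι → ℤ) {p q : F} (hq : q ≠ 0) :
    p * ∏ f, x f ^ max (c f) 0 + q * ∏ f, x f ^ max (-c f) 0
      = q * (∏ f, x f ^ max (-c f) 0) * (p / q * (∏ f, x f ^ c f) + 1) := by
  have hpos : ∏ f, x f ^ max (c f) 0 = (∏ f, x f ^ c f) * ∏ f, x f ^ max (-c f) 0 := by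
    rw [← prod_zpow_add hx]
    exact prod_congr rfl fun f _ => by congr 1; omega
  rw [hpos]
  field_simp

end Monomials

section Mutation

variable {ι : Type*} [Fintype ι] [DecidableEq ι] {F : Type*} [Field F] {B : ι → ι → ℤ} {z : ι}
  {x xb : ι → F}

theorem prod_zpow_matrixMutation_self (hBzz : B z z = 0) (ha : ∀ f, f ≠ z → xb f = x f) :
    ∏ f, xb f ^ matrixMutation B z f z = (∏ f, x f ^ B f z)⁻¹ := by
  rw [← prod_inv_distrib]
  refine prod_congr rfl fun f _ => ?_
  rw [matrixMutation_right_self, zpow_neg]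
  by_cases hf : f = z
  · simp [hf, hBzz]
  · rw [ha f hf]

theorem prod_zpow_matrixMutation_of_ne (hBzz : B z z = 0) (hx : ∀ f, x f ≠ 0)
    (ha : ∀ f, f ≠ z → xb f = x f) {y : ι} (hy : y ≠ z) :
    ∏ f, xb f ^ matrixMutation B z f y
      = (x z * xb z) ^ (-B z y) * (∏ f, x f ^ B f y) * (∏ f, x f ^ B f z) ^ max (B z y) 0
        * (∏ f, x f ^ max (-B f z) 0) ^ B z y := by
  rw [prod_eq_div_mul_prod_of_eq_of_ne (g := fun f => x f ^ (B f y + B f z * max (B z y) 0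
      + max (-B f z) 0 * B z y)) (zpow_ne_zero _ (hx z)) fun f hf => by
        rw [ha f hf, matrixMutation_of_ne B z hf hy],
    prod_zpow_add hx, prod_zpow_add hx, prod_zpow_mul, prod_zpow_mul, matrixMutation_left_self,
    hBzz]
  simp only [zero_mul, neg_zero, max_self, add_zero, zpow_neg, mul_zpow, div_eq_mul_inv]
  ring

end Mutation

theorem yhat_mutation_general {F : Type*} [Field F] {ι : Type*} [Fintype ι] [DecidableEq ι]
    (z : ι) (B : ι → ι → ℤ) (hBzz : B z z = 0)
    (B' : ι → ι → ℤ) (hB' : B' = matrixMutation B z)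
    (x xb pp pm ppb pmb : ι → F)
    (hx : ∀ f, x f ≠ 0) (hxb : ∀ f, xb f ≠ 0)
    (hpm : ∀ f, pm f ≠ 0)
    (ha : ∀ f, f ≠ z → xb f = x f)
    (hb : x z * xb z = pp z * ∏ f, x f ^ max (B f z) 0
            + pm z * ∏ f, x f ^ max (-B f z) 0)
    (hc1 : ppb z = pm z) (hc2 : pmb z = pp z)
    (hd : ∀ y, y ≠ z → ppb y / pmb y
        = (pp y / pm y) * (pp z / pm z) ^ max (B z y) 0 * pm z ^ (B z y))
    (yh yhb : ι → F)
    (hyh : ∀ e, yh e = (pp e / pm e) * ∏ f, x f ^ (B f e))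
    (hyhb : ∀ e, yhb e = (ppb e / pmb e) * ∏ f, xb f ^ (B' f e)) :
    yhb z = (yh z)⁻¹ ∧ yh z + 1 ≠ 0 ∧
      ∀ f, f ≠ z →
        yhb f = yh f * yh z ^ max (B z f) 0 * (yh z + 1) ^ (-B z f) := by
  subst hB'
  have hexchange : x z * xb z = pm z * (∏ f, x f ^ max (-B f z) 0) * (yh z + 1) := by
    rw [hb, mul_prod_zpow_posPart_add hx _ (hpm z), hyh]
  have hyz : yh z + 1 ≠ 0 := fun h => mul_ne_zero (hx z) (hxb z) (by rw [hexchange, h, mul_zero])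
  refine ⟨?_, hyz, fun y hy => ?_⟩
  · rw [hyhb, hyh, hc1, hc2, prod_zpow_matrixMutation_self hBzz ha, mul_inv, inv_div]
  · rw [hyhb, hd y hy, prod_zpow_matrixMutation_of_ne hBzz hx ha hy, hexchange, hyh y, hyh z]
    simp only [mul_zpow, zpow_neg]
    field_simp [zpow_ne_zero _ (hpm z), zpow_ne_zero _ (prod_zpow_ne_zero hx _)]

/-- Proposition 5 (`pr:yhat`): if the seed `(x̄, p̄±, B̄)` is obtained from the seed
`(x, p±, B)` by a non-normalized seed mutation in direction `z`, then the quantities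
`ŷ(e) = (p⁺(e)/p⁻(e))·∏_f x(f)^{B(f,e)}` satisfy the (normalized) Y-pattern mutation rule:
`ŷ̄(z) = ŷ(z)⁻¹` and, for `f ≠ z`,
`ŷ̄(f) = ŷ(f)·ŷ(z)^{[B(z,f)]₊}·(ŷ(z)+1)^{−B(z,f)}`; in particular `ŷ(z) + 1 ≠ 0`. -/
theorem yhat_mutation {F : Type*} [Field F] {ι : Type*} [Fintype ι] [DecidableEq ι]
    (z : ι) (B : ι → ι → ℤ) (hBzz : B z z = 0)
    (B' : ι → ι → ℤ) (hB' : B' = matrixMutation B z)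
    (x xb pp pm ppb pmb : ι → F)
    (hx : ∀ f, x f ≠ 0) (hxb : ∀ f, xb f ≠ 0)
    (hpp : ∀ f, pp f ≠ 0) (hpm : ∀ f, pm f ≠ 0)
    (hppb : ∀ f, ppb f ≠ 0) (hpmb : ∀ f, pmb f ≠ 0)
    (ha : ∀ f, f ≠ z → xb f = x f)
    (hb : x z * xb z = pp z * ∏ f, x f ^ max (B f z) 0
            + pm z * ∏ f, x f ^ max (-B f z) 0)
    (hc1 : ppb z = pm z) (hc2 : pmb z = pp z)
    (hd : ∀ y, y ≠ z → ppb y / pmb y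
        = (pp y / pm y) * (pp z / pm z) ^ max (B z y) 0 * pm z ^ (B z y))
    (yh yhb : ι → F)
    (hyh : ∀ e, yh e = (pp e / pm e) * ∏ f, x f ^ (B f e))
    (hyhb : ∀ e, yhb e = (ppb e / pmb e) * ∏ f, xb f ^ (B' f e)) :
    yhb z = (yh z)⁻¹ ∧ yh z + 1 ≠ 0 ∧
      ∀ f, f ≠ z →
        yhb f = yh f * yh z ^ max (B z f) 0 * (yh z + 1) ^ (-B z f) :=
  yhat_mutation_general z B hBzz B' hB' x xb pp pm ppb pmb hx hxb hpm ha hb hc1 hc2 hd yh yhb hyh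
    hyhb
end

section
/- Seed mutation is symmetric. Let F be a field, ι a finite index set, z ∈ ι, B : ι → ι → ℤ with B(z,z) = 0, and B̄ = μ_z(B). Let x, x̄, p⁺, p⁻, p̄⁺, p̄⁻ : ι → F take only nonzero values and satisfy: (a) x̄(f) = x(f) for all f ≠ z; (b) x(z)·x̄(z) = p⁺(z)·∏_f x(f)^{[B(f,z)]₊} + p⁻(z)·∏_f x(f)^{[−B(f,z)]₊}; (c) p̄⁺(z) = p⁻(z) and p̄⁻(z) = p⁺(z); (d) for every y ≠ z, p̄⁺(y)/p̄⁻(y) = (p⁺(y)/p⁻(y))·(p⁺(z)/p⁻(z))^{[B(z,y)]₊}·p⁻(z)^{B(z,y)}. Then the same conditions hold with the barred and unbarred data interchanged and B replaced by B̄; in particular: x̄(z)·x(z) = p̄⁺(z)·∏_f x̄(f)^{[B̄(f,z)]₊} + p̄⁻(z)·∏_f x̄(f)^{[−B̄(f,z)]₊}, and for every y ≠ z, p⁺(y)/p⁻(y) = (p̄⁺(y)/p̄⁻(y))·(p̄⁺(z)/p̄⁻(z))^{[B̄(z,y)]₊}·p̄⁻(z)^{B̄(z,y)}. -/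
open Finset

theorem matrixMutation_apply_self_left {ι : Type*} [DecidableEq ι] (B : ι → ι → ℤ) (z y : ι) :
    matrixMutation B z z y = -B z y := by
  simp [matrixMutation]

theorem matrixMutation_apply_self_right {ι : Type*} [DecidableEq ι] (B : ι → ι → ℤ) (z x : ι) :
    matrixMutation B z x z = -B x z := by
  simp [matrixMutation]

theorem prod_zpow_congr_of_eq_off {M : Type*} [DivisionCommMonoid M] {ι : Type*} [Fintype ι]
    {z : ι} {u v : ι → M} (huv : ∀ f, f ≠ z → u f = v f) {e : ι → ℤ} (he : e z = 0) :
    ∏ f, u f ^ e f = ∏ f, v f ^ e f := by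
  refine prod_congr rfl fun f _ => ?_
  by_cases hf : f = z
  · simp [hf, he]
  · rw [huv f hf]

section CoefficientFactor

variable {G₀ : Type*} [CommGroupWithZero G₀]

theorem div_zpow_max_mul_zpow {m : G₀} (hm : m ≠ 0) (a : G₀) (b : ℤ) :
    (a / m) ^ max b 0 * m ^ b = a ^ max b 0 / m ^ max (-b) 0 := by
  have hexp : b - max b 0 = -max (-b) 0 := by omega
  rw [div_zpow, div_mul_eq_mul_div, mul_div_assoc, ← zpow_sub₀ hm, hexp, zpow_neg,
    div_eq_mul_inv]

/-- The factor by which mutation in direction `z` rescales the coefficient ratio `p⁺/p⁻`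
is inverted by mutating back, with `p±(z)` swapped and `B(z, y)` negated. -/
theorem div_zpow_max_mul_zpow_mul_swap_neg {a m : G₀} (ha : a ≠ 0) (hm : m ≠ 0) (b : ℤ) :
    (a / m) ^ max b 0 * m ^ b * ((m / a) ^ max (-b) 0 * a ^ (-b)) = 1 := by
  rw [div_zpow_max_mul_zpow hm, div_zpow_max_mul_zpow ha, neg_neg, div_mul_div_comm,
    mul_comm (m ^ _), div_self (mul_ne_zero (zpow_ne_zero _ ha) (zpow_ne_zero _ hm))]

end CoefficientFactor

theorem seedMutation_symmetric_general {F : Type*} [Field F] {ι : Type*} [Fintype ι] [DecidableEq ι]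
    (z : ι) (B : ι → ι → ℤ) (hBzz : B z z = 0)
    (B' : ι → ι → ℤ) (hB' : B' = matrixMutation B z)
    (x xb pp pm ppb pmb : ι → F)
    (hpp : ∀ f, pp f ≠ 0) (hpm : ∀ f, pm f ≠ 0)
    (ha : ∀ f, f ≠ z → xb f = x f)
    (hb : x z * xb z = pp z * ∏ f, x f ^ max (B f z) 0
            + pm z * ∏ f, x f ^ max (-B f z) 0)
    (hc1 : ppb z = pm z) (hc2 : pmb z = pp z)
    (hd : ∀ y, y ≠ z → ppb y / pmb y
        = (pp y / pm y) * (pp z / pm z) ^ max (B z y) 0 * pm z ^ (B z y)) :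
    (∀ f, f ≠ z → x f = xb f) ∧
    (xb z * x z = ppb z * ∏ f, xb f ^ max (B' f z) 0
        + pmb z * ∏ f, xb f ^ max (-B' f z) 0) ∧
    (pp z = pmb z ∧ pm z = ppb z) ∧
    (∀ y, y ≠ z → pp y / pm y
        = (ppb y / pmb y) * (ppb z / pmb z) ^ max (B' z y) 0 * pmb z ^ (B' z y)) := by
  subst hB'
  refine ⟨fun f hf => (ha f hf).symm, ?_, ⟨hc2.symm, hc1.symm⟩, fun y hy => ?_⟩
  · simp only [matrixMutation_apply_self_right, neg_neg]
    rw [prod_zpow_congr_of_eq_off ha (e := fun f => max (-B f z) 0) (by simp [hBzz]),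
      prod_zpow_congr_of_eq_off ha (e := fun f => max (B f z) 0) (by simp [hBzz]),
      hc1, hc2, mul_comm, hb, add_comm]
  · rw [hd y hy, matrixMutation_apply_self_left, hc1, hc2]
    linear_combination (-(pp y / pm y)) *
      div_zpow_max_mul_zpow_mul_swap_neg (hpp z) (hpm z) (B z y)

/-- Seed mutation is symmetric: if the seed `(x̄, p̄±, B̄)` is obtained from `(x, p±, B)` by a
non-normalized seed mutation in direction `z`, then `(x, p±, B)` is obtained from
`(x̄, p̄±, B̄)` by a seed mutation in direction `z`: the conditions (a)–(d) hold with barred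
and unbarred data interchanged and `B` replaced by `B̄ = μ_z(B)`. -/
theorem seedMutation_symmetric {F : Type*} [Field F] {ι : Type*} [Fintype ι] [DecidableEq ι]
    (z : ι) (B : ι → ι → ℤ) (hBzz : B z z = 0)
    (B' : ι → ι → ℤ) (hB' : B' = matrixMutation B z)
    (x xb pp pm ppb pmb : ι → F)
    (hx : ∀ f, x f ≠ 0) (hxb : ∀ f, xb f ≠ 0)
    (hpp : ∀ f, pp f ≠ 0) (hpm : ∀ f, pm f ≠ 0)
    (hppb : ∀ f, ppb f ≠ 0) (hpmb : ∀ f, pmb f ≠ 0)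
    (ha : ∀ f, f ≠ z → xb f = x f)
    (hb : x z * xb z = pp z * ∏ f, x f ^ max (B f z) 0
            + pm z * ∏ f, x f ^ max (-B f z) 0)
    (hc1 : ppb z = pm z) (hc2 : pmb z = pp z)
    (hd : ∀ y, y ≠ z → ppb y / pmb y
        = (pp y / pm y) * (pp z / pm z) ^ max (B z y) 0 * pm z ^ (B z y)) :
    (∀ f, f ≠ z → x f = xb f) ∧
    (xb z * x z = ppb z * ∏ f, xb f ^ max (B' f z) 0
        + pmb z * ∏ f, xb f ^ max (-B' f z) 0) ∧
    (pp z = pmb z ∧ pm z = ppb z) ∧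
    (∀ y, y ≠ z → pp y / pm y
        = (ppb y / pmb y) * (ppb z / pmb z) ^ max (B' z y) 0 * pmb z ^ (B' z y)) :=
  seedMutation_symmetric_general z B hBzz B' hB' x xb pp pm ppb pmb hpp hpm ha hb hc1 hc2 hd
end

section
/- The key monomial identity in the proof that rescaling yields an exchange pattern: let G be a multiplicatively-written commutative group, ι a finite index set, z ∈ ι, B : ι → ι → ℤ with B(z,z) = 0, and B̄ = μ_z(B). Then for any c : ι → G, any c̄ ∈ G, and any f ≠ z, one has (∏_{g ≠ z} c(g)^{B̄(g,f)})·c̄^{B̄(z,f)} = (c(z)·c̄)^{−B(z,f)}·(∏_{g : B(g,z)·B(z,f) > 0} c(g)^{B(g,z)·|B(z,f)|})·∏_g c(g)^{B(g,f)}. -/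
open Finset

/-- The key monomial identity in the proof that rescaling yields an exchange pattern:
for `B̄ = μ_z(B)` and any `f ≠ z`,
`(∏_{g ≠ z} c(g)^{B̄(g,f)})·c̄^{B̄(z,f)}
  = (c(z)·c̄)^{−B(z,f)}·(∏_{g : B(g,z)·B(z,f) > 0} c(g)^{B(g,z)·|B(z,f)|})·∏_g c(g)^{B(g,f)}`. -/
theorem rescaling_monomial_identity {G : Type*} [CommGroup G] {ι : Type*} [Fintype ι]
    [DecidableEq ι] (z : ι) (B : ι → ι → ℤ) (hBzz : B z z = 0)
    (B' : ι → ι → ℤ) (hB' : B' = matrixMutation B z)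
    (c : ι → G) (cb : G) (f : ι) (hf : f ≠ z) :
    (∏ g ∈ univ.filter (fun g => g ≠ z), c g ^ B' g f) * cb ^ B' z f
      = (c z * cb) ^ (-B z f)
        * (∏ g ∈ univ.filter (fun g => 0 < B g z * B z f), c g ^ (B g z * |B z f|))
        * ∏ g, c g ^ B g f := by
  subst hB'
  have hz : matrixMutation B z z f = -B z f := by simp [matrixMutation]
  rw [hz]
  have key : ∀ g ∈ univ.filter (fun g => g ≠ z),
      c g ^ matrixMutation B z g f
        = c g ^ B g f * (if 0 < B g z * B z f then c g ^ (B g z * |B z f|) else 1) := by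
    intro g hg
    simp only [mem_filter, mem_univ, true_and] at hg
    simp only [matrixMutation, if_neg (by tauto : ¬(g = z ∨ f = z))]
    rcases lt_trichotomy (B g z * B z f) 0 with h | h | h
    · rw [if_neg (not_le.2 h), if_neg (not_lt.2 h.le), mul_one]
    · have h0 : |B g z| * B z f = 0 := by
        rcases mul_eq_zero.1 h with h' | h' <;> simp [h']
      rw [if_pos h.ge, h0, add_zero, if_neg (by simp [h]), mul_one]
    · have habs : |B g z| * B z f = B g z * |B z f| := by
        rcases le_or_gt 0 (B g z) with h1 | h1 <;> rcases le_or_gt 0 (B z f) with h2 | h2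
        · rw [abs_of_nonneg h1, abs_of_nonneg h2]
        · nlinarith
        · nlinarith
        · rw [abs_of_neg h1, abs_of_neg h2]; ring
      rw [if_pos h.le, if_pos h, habs, zpow_add]
  rw [Finset.prod_congr rfl key, Finset.prod_mul_distrib]
  have h1 : (∏ g ∈ univ.filter (fun g => g ≠ z),
      (if 0 < B g z * B z f then c g ^ (B g z * |B z f|) else 1))
      = ∏ g ∈ univ.filter (fun g => 0 < B g z * B z f), c g ^ (B g z * |B z f|) := by
    rw [← Finset.prod_filter, Finset.filter_filter]
    apply Finset.prod_congr _ (fun _ _ => rfl)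
    apply Finset.filter_congr
    intro g _
    simp only [ne_eq, and_iff_right_iff_imp]
    intro hp hg
    rw [hg, hBzz, zero_mul] at hp
    exact lt_irrefl 0 hp
  rw [h1]
  have h2 : (∏ g, c g ^ B g f)
      = c z ^ B z f * ∏ g ∈ univ.filter (fun g => g ≠ z), c g ^ B g f := by
    have hset : univ.filter (fun g => g ≠ z) = univ \ {z} := by
      ext g; simp
    rw [hset]
    exact Finset.prod_eq_mul_prod_sdiff_singleton_of_mem (mem_univ z) _
  rw [h2, mul_zpow]
  simp [zpow_neg, mul_assoc, mul_comm, mul_left_comm]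
end

section
/- Ptolemy relation for lambda lengths in the light-cone (hyperboloid) model: let v₁, v₂, v₃, v₄ ∈ ℝ² be vectors such that Δ(v_i,v_j) = (v_i)₀·(v_j)₁ − (v_i)₁·(v_j)₀ > 0 for all 1 ≤ i < j ≤ 4 (i.e. the four vectors are positively cyclically ordered in a half-plane). Define λ_{ij} = √(−2·⟨w(v_i), w(v_j)⟩), where Q(M) = −det(M), ⟨M,N⟩ = (Q(M+N) − Q(M) − Q(N))/2, and w(v) = v·vᵀ. Then the lambda lengths of the sides and diagonals of the corresponding decorated ideal quadrilateral satisfy the Ptolemy relation λ₁₃·λ₂₄ = λ₁₂·λ₃₄ + λ₁₄·λ₂₃. -/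
/-!
`-2⟨v vᵀ, w wᵀ⟩` is the square of the 2×2 determinant `Δ(v, w)`, so under the
positivity hypotheses every lambda length is a determinant `Δ(v_i, v_j)`, and the Ptolemy
relation becomes the Plücker identity `Δ₁₃Δ₂₄ = Δ₁₂Δ₃₄ + Δ₁₄Δ₂₃`.
-/

/-- The quadratic form `Q(M) = −det M` on 2×2 real matrices. -/
noncomputable def negDetForm (M : Matrix (Fin 2) (Fin 2) ℝ) : ℝ := -M.det

/-- The polarization `⟨M,N⟩ = (Q(M+N) − Q(M) − Q(N))/2` of `Q = −det`. -/
noncomputable def negDetPolar (M N : Matrix (Fin 2) (Fin 2) ℝ) : ℝ :=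
  (negDetForm (M + N) - negDetForm M - negDetForm N) / 2

/-- The rank-one symmetric matrix `w(v) = v·vᵀ` associated with `v ∈ ℝ²`. -/
def rankOneMat (v : Fin 2 → ℝ) : Matrix (Fin 2) (Fin 2) ℝ := Matrix.vecMulVec v v

/-- The lambda length `λ = √(−2⟨w(v), w(w)⟩)` between the decorated ideal points
represented by the null vectors `w(v)`, `w(w)`. -/
noncomputable def lambdaLen (v w : Fin 2 → ℝ) : ℝ :=
  Real.sqrt (-2 * negDetPolar (rankOneMat v) (rankOneMat w))

/-- `Δ(u, v)`, the determinant of the 2×2 matrix with rows `u` and `v`. -/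
def wedge {R : Type*} [CommRing R] (u v : Fin 2 → R) : R := u 0 * v 1 - u 1 * v 0

theorem wedge_mul_wedge_eq_add {R : Type*} [CommRing R] (a b c d : Fin 2 → R) :
    wedge a c * wedge b d = wedge a b * wedge c d + wedge a d * wedge b c := by
  simp only [wedge]
  ring

theorem neg_two_mul_negDetPolar_rankOneMat (u v : Fin 2 → ℝ) :
    -2 * negDetPolar (rankOneMat u) (rankOneMat v) = wedge u v ^ 2 := by
  simp only [negDetPolar, negDetForm, rankOneMat, wedge, Matrix.det_fin_two, Matrix.add_apply,
    Matrix.vecMulVec_apply]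
  ring

theorem lambdaLen_eq_abs_wedge (u v : Fin 2 → ℝ) : lambdaLen u v = |wedge u v| := by
  rw [lambdaLen, neg_two_mul_negDetPolar_rankOneMat, Real.sqrt_sq_eq_abs]

theorem lambdaLen_eq_wedge {u v : Fin 2 → ℝ} (h : 0 ≤ wedge u v) : lambdaLen u v = wedge u v := by
  rw [lambdaLen_eq_abs_wedge, abs_of_nonneg h]

/-- Ptolemy relation for lambda lengths in the light-cone (hyperboloid) model: if the
vectors `v₁, v₂, v₃, v₄ ∈ ℝ²` are positively cyclically ordered (all determinants
`Δ(v_i, v_j) > 0` for `i < j`), then the lambda lengths of the sides and diagonals of the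
corresponding decorated ideal quadrilateral satisfy `λ₁₃·λ₂₄ = λ₁₂·λ₃₄ + λ₁₄·λ₂₃`. -/
theorem lambdaLength_ptolemy (v₁ v₂ v₃ v₄ : Fin 2 → ℝ)
    (h12 : 0 < v₁ 0 * v₂ 1 - v₁ 1 * v₂ 0)
    (h13 : 0 < v₁ 0 * v₃ 1 - v₁ 1 * v₃ 0)
    (h14 : 0 < v₁ 0 * v₄ 1 - v₁ 1 * v₄ 0)
    (h23 : 0 < v₂ 0 * v₃ 1 - v₂ 1 * v₃ 0)
    (h24 : 0 < v₂ 0 * v₄ 1 - v₂ 1 * v₄ 0)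
    (h34 : 0 < v₃ 0 * v₄ 1 - v₃ 1 * v₄ 0) :
    lambdaLen v₁ v₃ * lambdaLen v₂ v₄
      = lambdaLen v₁ v₂ * lambdaLen v₃ v₄ + lambdaLen v₁ v₄ * lambdaLen v₂ v₃ := by
  rw [lambdaLen_eq_wedge h13.le, lambdaLen_eq_wedge h24.le, lambdaLen_eq_wedge h12.le,
    lambdaLen_eq_wedge h34.le, lambdaLen_eq_wedge h14.le, lambdaLen_eq_wedge h23.le]
  exact wedge_mul_wedge_eq_add v₁ v₂ v₃ v₄
end
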